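/- Let n ≥ 3 and let C(n) = 𝓗^{n−2}(S^{n−2}). For t ≠ 0 define e(t,1) = C(n)^{−1} ∫_{S^{n−2}} ( t² + |e₁ − y|² )^{(2−n)/2} d𝓗^{n−2}(y), where e₁ is a fixed unit vector of ℝ^{n−1}. Then t ↦ e(t,1) is twice differentiable on (0,∞), and there is a constant C > 0 depending only on n such that |d²/dt² e(t,1)| ≤ C t^{−2} for all t ∈ (0, 1/2]. -/

import Mathlib

/-
A cap `S ∩ B(e, ρ)`, `ρ ≤ 1/2`, of the unit sphere `S = S^{n-2}` is the image of a `ρ`-ball of the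
tangent hyperplane `e^⊥` under the 2-Lipschitz graph chart `v ↦ √(1 - |v|²) e + v`, so
`𝓗^{n-2}(S ∩ B(e, ρ)) ≲ ρ^{n-2}` for all `ρ ≥ 0` (for large `ρ` because `𝓗^{n-2}(S) < ∞`, by
compactness). For `t > 0` all integrands are bounded near `t`, so we may differentiate twice
under the integral sign, and `|∂ₜ² e(t,1)|` is at most a multiple of
`∫_S (t² + |e₁ - y|²)^{-n/2}`. On the dyadic shell `|e₁ - y| ≈ 2^k t` this kernel is
`≲ (2^k t)^{-n}` while the shell has measure `≲ (2^k t)^{n-2}`; the contributions `≲ 4^{-k} t^{-2}`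
sum to `O(t^{-2})`.
-/

open MeasureTheory Metric Module Filter Set
open scoped ENNReal NNReal Topology

noncomputable section

/-- `C(n) = 𝓗^{n−2}(S^{n−2})`, the `(n−2)`-dimensional Hausdorff measure of the unit sphere
`S^{n−2} ⊂ ℝ^{n−1}`. -/
def sphC (n : ℕ) : ℝ :=
  (μH[(n : ℝ) - 2] (Metric.sphere (0 : EuclideanSpace ℝ (Fin (n - 1))) 1)).toReal

/-- `e(t,1) = C(n)⁻¹ ∫_{S^{n−2}} (t² + |e₁ − y|²)^{(2−n)/2} d𝓗^{n−2}(y)`: the Newtonian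
potential at `(t, e₁) ∈ ℝ × ℝ^{n−1} = ℝⁿ` of the normalized Hausdorff measure of the sphere
`{0} × S^{n−2} ⊂ ℝⁿ`. -/
def eFun1 (n : ℕ) (e₁ : EuclideanSpace ℝ (Fin (n - 1))) (t : ℝ) : ℝ :=
  (sphC n)⁻¹ *
    ∫ y in Metric.sphere (0 : EuclideanSpace ℝ (Fin (n - 1))) 1,
      (t ^ 2 + ‖e₁ - y‖ ^ 2) ^ (((2 : ℝ) - n) / 2) ∂(μH[(n : ℝ) - 2])

lemma abs_sqrt_one_sub_sq_sub_le {a b : ℝ} (ha : 0 ≤ a) (hb : 0 ≤ b) (ha' : a ≤ 1 / 2)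
    (hb' : b ≤ 1 / 2) : |√(1 - a ^ 2) - √(1 - b ^ 2)| ≤ |a - b| := by
  have hsa : 1 / 2 ≤ √(1 - a ^ 2) := Real.le_sqrt_of_sq_le (by nlinarith)
  have hsb : 1 / 2 ≤ √(1 - b ^ 2) := Real.le_sqrt_of_sq_le (by nlinarith)
  have hsa2 := Real.sq_sqrt (show 0 ≤ 1 - a ^ 2 by nlinarith)
  have hsb2 := Real.sq_sqrt (show 0 ≤ 1 - b ^ 2 by nlinarith)
  -- `√x - √y = (x - y) / (√x + √y)`, where `|x - y| = |a - b| (a + b) ≤ |a - b|` and `√x + √y ≥ 1`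
  rw [abs_le] at *
  constructor <;> cases abs_cases (a - b) <;> nlinarith

section SphericalCap

variable {E : Type*} [NormedAddCommGroup E] [InnerProductSpace ℝ E]

def sphereChart (e : E) (v : (ℝ ∙ e)ᗮ) : E := √(1 - ‖v‖ ^ 2) • e + v

lemma lipschitzOnWith_sphereChart {e : E} (he : ‖e‖ = 1) :
    LipschitzOnWith 2 (sphereChart e) (closedBall 0 (1 / 2)) := by
  rw [lipschitzOnWith_iff_norm_sub_le]
  intro v hv w hw
  rw [mem_closedBall_zero_iff] at hv hw
  have hsqrt := abs_sqrt_one_sub_sq_sub_le (norm_nonneg v) (norm_nonneg w) hv hw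
  calc ‖sphereChart e v - sphereChart e w‖
      = ‖(√(1 - ‖v‖ ^ 2) - √(1 - ‖w‖ ^ 2)) • e + ((v - w : (ℝ ∙ e)ᗮ) : E)‖ := by
        rw [sphereChart, sphereChart, sub_smul, Submodule.coe_sub]; abel_nf
    _ ≤ |‖v‖ - ‖w‖| + ‖v - w‖ := by
        refine (norm_add_le _ _).trans (add_le_add ?_ le_rfl)
        rw [norm_smul, he, mul_one, Real.norm_eq_abs]
        exact hsqrt
    _ ≤ (2 : ℝ≥0) * ‖v - w‖ := by
        have := abs_norm_sub_norm_le v w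
        push_cast; linarith

lemma sphere_inter_closedBall_subset_image_sphereChart {e : E} (he : ‖e‖ = 1) {ρ : ℝ}
    (hρ : ρ ≤ 1 / 2) :
    sphere 0 1 ∩ closedBall e ρ ⊆ sphereChart e '' closedBall 0 ρ := by
  rintro y ⟨hy, hye⟩
  rw [mem_sphere_zero_iff_norm] at hy
  rw [mem_closedBall, dist_eq_norm] at hye
  set s := inner ℝ e y
  have hw : y - s • e ∈ (ℝ ∙ e)ᗮ := by
    rw [Submodule.mem_orthogonal_singleton_iff_inner_right, inner_sub_right,
      real_inner_smul_right, real_inner_self_eq_norm_sq, he]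
    ring
  have hye2 : ‖y - e‖ ^ 2 = 2 - 2 * s := by
    rw [norm_sub_sq_real, hy, he, real_inner_comm]; ring
  have hw2 : ‖y - s • e‖ ^ 2 = 1 - s ^ 2 := by
    rw [norm_sub_sq_real, hy, norm_smul, real_inner_smul_right, Real.norm_eq_abs, he,
      real_inner_comm]
    simp only [mul_one, sq_abs]; ring
  have hs : 0 ≤ s := by nlinarith [norm_nonneg (y - e)]
  refine ⟨⟨y - s • e, hw⟩, ?_, ?_⟩
  · rw [mem_closedBall_zero_iff, Submodule.coe_norm]
    nlinarith [norm_nonneg (y - e), norm_nonneg (y - s • e)]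
  · rw [sphereChart, Submodule.coe_norm, hw2, sub_sub_cancel, Real.sqrt_sq hs]
    exact add_sub_cancel (s • e) y

variable [FiniteDimensional ℝ E] [MeasurableSpace E] [BorelSpace E]

lemma exists_hausdorffMeasure_sphere_inter_closedBall_le {m : ℕ}
    (hE : finrank ℝ E = m + 1) {e : E} (he : ‖e‖ = 1) :
    ∃ C : ℝ≥0∞, C ≠ ⊤ ∧ ∀ ρ, 0 ≤ ρ → ρ ≤ 1 / 2 →
      μH[m] (sphere (0 : E) 1 ∩ closedBall e ρ) ≤ C * ENNReal.ofReal (ρ ^ m) := by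
  have hW : finrank ℝ (ℝ ∙ e)ᗮ = m := by
    have := (ℝ ∙ e).finrank_add_finrank_orthogonal
    rw [finrank_span_singleton (norm_ne_zero_iff.mp (he ▸ one_ne_zero)), hE] at this
    omega
  refine ⟨2 ^ m * μH[m] (closedBall (0 : (ℝ ∙ e)ᗮ) 1), ?_, fun ρ hρ hρ' => ?_⟩
  · refine ENNReal.mul_ne_top (by simp) ?_
    rw [← hW]
    exact (isCompact_closedBall _ _).measure_ne_top
  calc μH[m] (sphere (0 : E) 1 ∩ closedBall e ρ)
      ≤ μH[m] (sphereChart e '' closedBall 0 ρ) :=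
        measure_mono (sphere_inter_closedBall_subset_image_sphereChart he hρ')
    _ ≤ (2 : ℝ≥0) ^ (m : ℝ) * μH[m] (closedBall (0 : (ℝ ∙ e)ᗮ) ρ) :=
        ((lipschitzOnWith_sphereChart he).mono
          (closedBall_subset_closedBall hρ')).hausdorffMeasure_image_le m.cast_nonneg
    _ = 2 ^ m * μH[m] (closedBall (0 : (ℝ ∙ e)ᗮ) 1) * ENNReal.ofReal (ρ ^ m) := by
        rw [← hW, Measure.addHaar_closedBall' _ _ hρ, hW, ENNReal.rpow_natCast]
        push_cast; ring

lemma hausdorffMeasure_sphere_lt_top {m : ℕ} (hE : finrank ℝ E = m + 1) :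
    μH[m] (sphere (0 : E) 1) < ⊤ := by
  obtain ⟨t, ht, hcover⟩ := (isCompact_sphere (0 : E) 1).elim_nhds_subcover
    (fun x => closedBall x (1 / 2)) (fun x _ => closedBall_mem_nhds x (by norm_num))
  calc μH[m] (sphere (0 : E) 1)
      ≤ μH[m] (⋃ x ∈ t, sphere (0 : E) 1 ∩ closedBall x (1 / 2)) := by
        refine measure_mono fun y hy => ?_
        simpa [hy, mem_sphere_zero_iff_norm.mp hy] using hcover hy
    _ ≤ ∑ x ∈ t, μH[m] (sphere (0 : E) 1 ∩ closedBall x (1 / 2)) :=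
        measure_biUnion_finset_le _ _
    _ < ⊤ := by
        refine ENNReal.sum_lt_top.mpr fun x hx => ?_
        obtain ⟨C, hC, hcap⟩ := exists_hausdorffMeasure_sphere_inter_closedBall_le hE
          (mem_sphere_zero_iff_norm.mp (ht x hx))
        exact (hcap _ (by norm_num) le_rfl).trans_lt
          (ENNReal.mul_lt_top hC.lt_top ENNReal.ofReal_lt_top)

lemma exists_restrict_sphere_closedBall_le {m : ℕ} (hE : finrank ℝ E = m + 1) {e : E}
    (he : ‖e‖ = 1) :
    ∃ C : ℝ, 0 ≤ C ∧ ∀ ρ, 0 ≤ ρ →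
      μH[m].restrict (sphere (0 : E) 1) (closedBall e ρ) ≤ ENNReal.ofReal (C * ρ ^ m) := by
  obtain ⟨C, hC, hcap⟩ := exists_hausdorffMeasure_sphere_inter_closedBall_le hE he
  set M := μH[m] (sphere (0 : E) 1)
  have hM : M ≠ ⊤ := (hausdorffMeasure_sphere_lt_top hE).ne
  refine ⟨C.toReal + 2 ^ m * M.toReal, by positivity, fun ρ hρ => ?_⟩
  rw [Measure.restrict_apply measurableSet_closedBall, Set.inter_comm, add_mul,
    ENNReal.ofReal_add (by positivity) (by positivity)]
  rcases le_or_gt ρ (1 / 2) with hρ' | hρ'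
  · refine (hcap ρ hρ hρ').trans (le_add_right (le_of_eq ?_))
    rw [ENNReal.ofReal_mul ENNReal.toReal_nonneg, ENNReal.ofReal_toReal hC]
  · refine le_add_left ((measure_mono Set.inter_subset_left).trans ?_)
    rw [ENNReal.le_ofReal_iff_toReal_le hM (by positivity)]
    have : 1 ≤ (2 * ρ) ^ m := one_le_pow₀ (by linarith)
    calc M.toReal ≤ M.toReal * (2 * ρ) ^ m := le_mul_of_one_le_right ENNReal.toReal_nonneg this
      _ = 2 ^ m * M.toReal * ρ ^ m := by ring

end SphericalCap

lemma sq_rpow_neg_div_two {a : ℝ} (ha : 0 ≤ a) (k : ℕ) : (a ^ 2) ^ (-(k : ℝ) / 2) = (a ^ k)⁻¹ := by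
  rw [neg_div, Real.rpow_neg (by positivity), ← Real.rpow_natCast_mul ha, Nat.cast_ofNat,
    mul_div_cancel₀ _ two_ne_zero, Real.rpow_natCast]

lemma exists_two_pow_mul_ge {t d : ℝ} (ht : 0 < t) :
    ∃ k : ℕ, d ≤ 2 ^ k * t ∧ (2 ^ k * t / 2) ^ 2 ≤ t ^ 2 + d ^ 2 := by
  have hex : ∃ k : ℕ, d ≤ 2 ^ k * t := by
    obtain ⟨k, hk⟩ := pow_unbounded_of_one_lt (d / t) one_lt_two
    exact ⟨k, ((div_lt_iff₀ ht).mp hk).le⟩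
  refine ⟨Nat.find hex, Nat.find_spec hex, ?_⟩
  by_cases h0 : Nat.find hex = 0
  · rw [h0]; nlinarith
  · obtain ⟨j, hj⟩ := Nat.exists_eq_succ_of_ne_zero h0
    have hlt : 2 ^ j * t < d := not_le.mp (Nat.find_min hex (by omega))
    rw [hj, pow_succ (2 : ℝ) j]
    nlinarith [show 0 ≤ 2 ^ j * t by positivity]

lemma exists_rpow_sq_add_sq_le_two_pow {t : ℝ} (ht : 0 < t) (d : ℝ) (m : ℕ) :
    ∃ k : ℕ, d ≤ 2 ^ k * t ∧
      (t ^ 2 + d ^ 2) ^ (-((m : ℝ) + 2) / 2) ≤ 2 ^ (m + 2) / (2 ^ k * t) ^ (m + 2) := by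
  obtain ⟨k, hdk, hk⟩ := exists_two_pow_mul_ge ht
  refine ⟨k, hdk, ?_⟩
  calc (t ^ 2 + d ^ 2) ^ (-((m : ℝ) + 2) / 2)
      ≤ ((2 ^ k * t / 2) ^ 2) ^ (-((m : ℝ) + 2) / 2) :=
        Real.rpow_le_rpow_of_nonpos (by positivity) hk
          (by have : (0 : ℝ) ≤ m := m.cast_nonneg; linarith)
    _ = 2 ^ (m + 2) / (2 ^ k * t) ^ (m + 2) := by
        rw [show ((m : ℝ) + 2) = ((m + 2 : ℕ) : ℝ) by push_cast; ring,
          sq_rpow_neg_div_two (by positivity), div_pow, inv_div]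

section DyadicPotential

variable {X : Type*} [PseudoMetricSpace X] [MeasurableSpace X] [OpensMeasurableSpace X]

lemma integral_rpow_sq_add_dist_sq_le (ν : Measure X) (x : X) {m : ℕ} {C : ℝ} (hC : 0 ≤ C)
    (hball : ∀ r, 0 ≤ r → ν (closedBall x r) ≤ ENNReal.ofReal (C * r ^ m)) {t : ℝ}
    (ht : 0 < t) :
    ∫ y, (t ^ 2 + dist x y ^ 2) ^ (-((m : ℝ) + 2) / 2) ∂ν ≤ 2 ^ (m + 2) * C * (4 / 3) / t ^ 2 := by
  set c : ℕ → ℝ := fun k => 2 ^ (m + 2) / (2 ^ k * t) ^ (m + 2)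
  have hdyadic : ∀ y, ENNReal.ofReal ((t ^ 2 + dist x y ^ 2) ^ (-((m : ℝ) + 2) / 2))
      ≤ ∑' k, (closedBall x (2 ^ k * t)).indicator (fun _ => ENNReal.ofReal (c k)) y := by
    intro y
    obtain ⟨k, hk, hle⟩ := exists_rpow_sq_add_sq_le_two_pow ht (dist x y) m
    refine le_trans ?_ (ENNReal.le_tsum k)
    rw [Set.indicator_of_mem (mem_closedBall'.mpr hk)]
    exact ENNReal.ofReal_le_ofReal hle
  have hterm : ∀ k : ℕ, ENNReal.ofReal (c k) * ν (closedBall x (2 ^ k * t))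
      ≤ ENNReal.ofReal (2 ^ (m + 2) * C / t ^ 2 * (1 / 4) ^ k) := by
    intro k
    refine (mul_le_mul_right (hball _ (by positivity)) _).trans ?_
    rw [← ENNReal.ofReal_mul (by positivity)]
    refine ENNReal.ofReal_le_ofReal (le_of_eq ?_)
    simp only [c]
    rw [one_div_pow, show (4 : ℝ) ^ k = (2 ^ k) ^ 2 by rw [← pow_mul, mul_comm, pow_mul]; norm_num]
    field_simp
    ring
  have hsum : HasSum (fun k : ℕ => 2 ^ (m + 2) * C / t ^ 2 * (1 / 4) ^ k)
      (2 ^ (m + 2) * C * (4 / 3) / t ^ 2) := by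
    rw [show 2 ^ (m + 2) * C * (4 / 3) / t ^ 2 = 2 ^ (m + 2) * C / t ^ 2 * (1 - 1 / 4)⁻¹ by ring]
    exact (hasSum_geometric_of_lt_one (by norm_num) (by norm_num)).mul_left _
  rw [integral_eq_lintegral_of_nonneg_ae (ae_of_all _ fun y => by positivity)
    (Continuous.rpow_const (by fun_prop) fun y => Or.inl (by positivity)).aestronglyMeasurable]
  refine ENNReal.toReal_le_of_le_ofReal (by positivity) ?_
  calc ∫⁻ y, ENNReal.ofReal ((t ^ 2 + dist x y ^ 2) ^ (-((m : ℝ) + 2) / 2)) ∂ν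
      ≤ ∫⁻ y, ∑' k, (closedBall x (2 ^ k * t)).indicator (fun _ => ENNReal.ofReal (c k)) y ∂ν :=
        lintegral_mono hdyadic
    _ = ∑' k, ENNReal.ofReal (c k) * ν (closedBall x (2 ^ k * t)) := by
        rw [lintegral_tsum fun k =>
          (measurable_const.indicator measurableSet_closedBall).aemeasurable]
        simp only [lintegral_indicator_const measurableSet_closedBall]
    _ ≤ ∑' k : ℕ, ENNReal.ofReal (2 ^ (m + 2) * C / t ^ 2 * (1 / 4) ^ k) :=
        ENNReal.tsum_le_tsum hterm
    _ = ENNReal.ofReal (2 ^ (m + 2) * C * (4 / 3) / t ^ 2) := by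
        rw [← ENNReal.ofReal_tsum_of_nonneg (fun k => by positivity) hsum.summable, hsum.tsum_eq]

end DyadicPotential

lemma abs_pow_mul_sq_add_rpow_le {i : ℕ} {q a b t s : ℝ} (ha : 0 < a) (hat : a ≤ t) (htb : t ≤ b)
    (hs : 0 ≤ s) (hq : q ≤ 0) : |t ^ i * (t ^ 2 + s) ^ q| ≤ b ^ i * (a ^ 2) ^ q := by
  have ht : 0 < t := ha.trans_le hat
  have hts : a ^ 2 ≤ t ^ 2 + s := by nlinarith
  have hrpow : 0 ≤ (t ^ 2 + s) ^ q := Real.rpow_nonneg (by positivity) _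
  rw [abs_of_nonneg (mul_nonneg (by positivity) hrpow)]
  exact mul_le_mul (pow_le_pow_left₀ ht.le htb i)
    (Real.rpow_le_rpow_of_nonpos (by positivity) hts hq) hrpow (pow_nonneg (ht.le.trans htb) i)

lemma hasDerivAt_pow_mul_sq_add_rpow (j : ℕ) (q : ℝ) {s t : ℝ} (hs : 0 ≤ s) (ht : t ≠ 0) :
    HasDerivAt (fun t => t ^ j * (t ^ 2 + s) ^ q)
      (j * (t ^ (j - 1) * (t ^ 2 + s) ^ q) + 2 * q * (t ^ (j + 1) * (t ^ 2 + s) ^ (q - 1))) t := by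
  have hsq : HasDerivAt (fun t => t ^ 2 + s) (2 * t) t := by
    simpa using (hasDerivAt_pow 2 t).add_const s
  exact ((hasDerivAt_pow j t).mul (hsq.rpow_const (p := q) (Or.inl (by positivity)))).congr_deriv
    (by ring)

section ParametricIntegral

variable {α : Type*} [MeasurableSpace α]

/-- `e(t,1)` and its `t`-derivatives are linear combinations of these integrals. -/
def sqAddRpowIntegral (ν : Measure α) (c : α → ℝ) (j : ℕ) (q t : ℝ) : ℝ :=
  ∫ y, t ^ j * (t ^ 2 + c y) ^ q ∂ν

variable {ν : Measure α} {c : α → ℝ}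

lemma sqAddRpowIntegral_nonneg (hc0 : ∀ y, 0 ≤ c y) (j : ℕ) (q : ℝ) {t : ℝ} (ht : 0 ≤ t) :
    0 ≤ sqAddRpowIntegral ν c j q t :=
  integral_nonneg fun y =>
    mul_nonneg (pow_nonneg ht j) (Real.rpow_nonneg (by linarith [hc0 y, sq_nonneg t]) q)

variable [IsFiniteMeasure ν]

lemma integrable_pow_mul_sq_add_rpow (hc : Measurable c) (hc0 : ∀ y, 0 ≤ c y) (j : ℕ) {q t : ℝ}
    (hq : q ≤ 0) (ht : 0 < t) : Integrable (fun y => t ^ j * (t ^ 2 + c y) ^ q) ν :=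
  Integrable.mono' (integrable_const (t ^ j * (t ^ 2) ^ q))
    (((measurable_const.add hc).pow_const q).const_mul (t ^ j)).aestronglyMeasurable
    (ae_of_all _ fun y => abs_pow_mul_sq_add_rpow_le ht le_rfl le_rfl (hc0 y) hq)

lemma hasDerivAt_sqAddRpowIntegral (hc : Measurable c) (hc0 : ∀ y, 0 ≤ c y) (j : ℕ) {q t : ℝ}
    (hq : q ≤ 0) (ht : 0 < t) :
    HasDerivAt (sqAddRpowIntegral ν c j q)
      (j * sqAddRpowIntegral ν c (j - 1) q t
        + 2 * q * sqAddRpowIntegral ν c (j + 1) (q - 1) t) t := by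
  have hball : ∀ x ∈ ball t (t / 2), t / 2 ≤ x ∧ x ≤ 2 * t := fun x hx => by
    rw [mem_ball, Real.dist_eq, abs_lt] at hx
    constructor <;> linarith
  have hint := fun i q' (hq' : q' ≤ 0) => integrable_pow_mul_sq_add_rpow (ν := ν) hc hc0 i hq' ht
  have hderiv := hasDerivAt_integral_of_dominated_loc_of_deriv_le (μ := ν) (x₀ := t)
    (F := fun x y => x ^ j * (x ^ 2 + c y) ^ q)
    (F' := fun x y => j * (x ^ (j - 1) * (x ^ 2 + c y) ^ q)
      + 2 * q * (x ^ (j + 1) * (x ^ 2 + c y) ^ (q - 1)))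
    (bound := fun _ => j * ((2 * t) ^ (j - 1) * ((t / 2) ^ 2) ^ q)
      + 2 * |q| * ((2 * t) ^ (j + 1) * ((t / 2) ^ 2) ^ (q - 1)))
    (ball_mem_nhds t (half_pos ht))
    (.of_forall fun x => (((measurable_const.add hc).pow_const q).const_mul _).aestronglyMeasurable)
    (hint j q hq)
    (((hint _ q hq).const_mul _).add
      ((hint _ (q - 1) (by linarith)).const_mul _)).aestronglyMeasurable
    (ae_of_all _ fun y x hx => by
      obtain ⟨hx1, hx2⟩ := hball x hx
      refine (norm_add_le _ _).trans (add_le_add ?_ ?_)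
      · rw [norm_mul, Real.norm_eq_abs, Real.norm_eq_abs, Nat.abs_cast]
        exact mul_le_mul_of_nonneg_left
          (abs_pow_mul_sq_add_rpow_le (half_pos ht) hx1 hx2 (hc0 y) hq) j.cast_nonneg
      · rw [norm_mul, Real.norm_eq_abs, Real.norm_eq_abs, abs_mul, abs_two]
        exact mul_le_mul_of_nonneg_left
          (abs_pow_mul_sq_add_rpow_le (half_pos ht) hx1 hx2 (hc0 y) (by linarith)) (by positivity))
    (integrable_const _)
    (ae_of_all _ fun y x hx =>
      hasDerivAt_pow_mul_sq_add_rpow j q (hc0 y) (by linarith [hball x hx]))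
  refine hderiv.2.congr_deriv ?_
  rw [integral_add ((hint _ q hq).const_mul _) ((hint _ (q - 1) (by linarith)).const_mul _),
    integral_const_mul (j : ℝ), integral_const_mul (2 * q)]
  rfl

lemma sqAddRpowIntegral_two_sub_one_le (hc : Measurable c) (hc0 : ∀ y, 0 ≤ c y) {q t : ℝ}
    (hq : q ≤ 0) (ht : 0 < t) :
    sqAddRpowIntegral ν c 2 (q - 1) t ≤ sqAddRpowIntegral ν c 0 q t := by
  refine integral_mono (integrable_pow_mul_sq_add_rpow hc hc0 2 (by linarith) ht)
    (integrable_pow_mul_sq_add_rpow hc hc0 0 hq ht) fun y => ?_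
  have hpos : 0 < t ^ 2 + c y := by linarith [hc0 y, pow_pos ht 2]
  rw [Real.rpow_sub_one hpos.ne', pow_zero, one_mul, mul_div_assoc', div_le_iff₀ hpos]
  rw [mul_comm (t ^ 2)]
  exact mul_le_mul_of_nonneg_left (by linarith [hc0 y]) (Real.rpow_nonneg hpos.le q)

lemma deriv_sqAddRpowIntegral_zero_eventuallyEq (hc : Measurable c) (hc0 : ∀ y, 0 ≤ c y)
    {q t : ℝ} (hq : q ≤ 0) (ht : 0 < t) :
    deriv (sqAddRpowIntegral ν c 0 q)
      =ᶠ[𝓝 t] fun s => 2 * q * sqAddRpowIntegral ν c 1 (q - 1) s := by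
  filter_upwards [Ioi_mem_nhds ht] with s hs
  simpa using (hasDerivAt_sqAddRpowIntegral hc hc0 0 hq hs).deriv

lemma abs_iteratedDeriv_two_sqAddRpowIntegral_zero_le (hc : Measurable c) (hc0 : ∀ y, 0 ≤ c y)
    {q t : ℝ} (hq : q ≤ 0) (ht : 0 < t) :
    |iteratedDeriv 2 (sqAddRpowIntegral ν c 0 q) t|
      ≤ 2 * |q| * (1 + 2 * |q - 1|) * sqAddRpowIntegral ν c 0 (q - 1) t := by
  have hq1 : q - 1 ≤ 0 := by linarith
  rw [iteratedDeriv_succ, iteratedDeriv_one,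
    (deriv_sqAddRpowIntegral_zero_eventuallyEq hc hc0 hq ht).deriv_eq,
    ((hasDerivAt_sqAddRpowIntegral hc hc0 1 hq1 ht).const_mul (2 * q)).deriv]
  have h2 := sqAddRpowIntegral_two_sub_one_le (ν := ν) hc hc0 hq1 ht
  have h2' := sqAddRpowIntegral_nonneg (ν := ν) hc0 2 (q - 1 - 1) ht.le
  have h0 := sqAddRpowIntegral_nonneg (ν := ν) hc0 0 (q - 1) ht.le
  push_cast
  rw [abs_mul, abs_mul, abs_two, mul_assoc (2 * |q|)]
  gcongr
  refine (abs_add_le _ _).trans ?_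
  rw [one_mul, abs_of_nonneg h0, abs_mul, abs_mul, abs_two, abs_of_nonneg h2']
  nlinarith [abs_nonneg (q - 1)]

end ParametricIntegral

/-- For `n ≥ 3` and a fixed unit vector `e₁` of `ℝ^{n−1}`, the function
`t ↦ e(t,1)` is twice differentiable on `(0,∞)`, and there is `C > 0` depending only on `n`
such that `|d²/dt² e(t,1)| ≤ C t⁻²` for all `t ∈ (0,1/2]`. -/
theorem stmt17 (n : ℕ) (hn : 3 ≤ n)
    (e₁ : EuclideanSpace ℝ (Fin (n - 1))) (he₁ : ‖e₁‖ = 1) :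
    (∀ t : ℝ, 0 < t → DifferentiableAt ℝ (eFun1 n e₁) t) ∧
    (∀ t : ℝ, 0 < t → DifferentiableAt ℝ (deriv (eFun1 n e₁)) t) ∧
    ∃ C : ℝ, 0 < C ∧ ∀ t : ℝ, 0 < t → t ≤ 1 / 2 →
      |iteratedDeriv 2 (eFun1 n e₁) t| ≤ C / t ^ 2 := by
  obtain ⟨m, rfl⟩ : ∃ m, n = m + 2 := ⟨n - 2, by omega⟩
  have hE : finrank ℝ (EuclideanSpace ℝ (Fin (m + 2 - 1))) = m + 1 := by simp
  set ν := μH[(m : ℝ)].restrict (sphere (0 : EuclideanSpace ℝ (Fin (m + 2 - 1))) 1)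
  have : IsFiniteMeasure ν := isFiniteMeasure_restrict.mpr (hausdorffMeasure_sphere_lt_top hE).ne
  set c := fun y => dist e₁ y ^ 2
  have hc : Measurable c := by fun_prop
  have hc0 : ∀ y, 0 ≤ c y := fun y => sq_nonneg _
  set p : ℝ := (2 - ((m + 2 : ℕ) : ℝ)) / 2
  have hp : p - 1 = -((m : ℝ) + 2) / 2 := by simp only [p]; push_cast; ring
  have hp0 : p ≤ 0 := by linarith [(m.cast_nonneg : (0 : ℝ) ≤ m)]
  have he : eFun1 (m + 2) e₁ = fun t => (sphC (m + 2))⁻¹ * sqAddRpowIntegral ν c 0 p t := by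
    funext t
    rw [eFun1, show ((m + 2 : ℕ) : ℝ) - 2 = m by push_cast; ring]
    simp only [sqAddRpowIntegral, pow_zero, one_mul, c, ν, p, dist_eq_norm]
  obtain ⟨C, hC, hball⟩ := exists_restrict_sphere_closedBall_le hE he₁
  refine ⟨fun t ht => ?_, fun t ht => ?_, ?_⟩
  · rw [he]
    exact (hasDerivAt_sqAddRpowIntegral hc hc0 0 hp0 ht).differentiableAt.const_mul _
  · rw [he, deriv_const_mul_field']
    refine DifferentiableAt.const_mul ?_ _
    exact (((hasDerivAt_sqAddRpowIntegral hc hc0 1 (by linarith) ht).const_mul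
      (2 * p)).differentiableAt.congr_of_eventuallyEq
      (deriv_sqAddRpowIntegral_zero_eventuallyEq hc hc0 hp0 ht))
  · set A := |(sphC (m + 2))⁻¹| * (2 * |p| * (1 + 2 * |p - 1|))
    set B := 2 ^ (m + 2) * C * (4 / 3)
    refine ⟨A * B + 1, by positivity, fun t ht _ => ?_⟩
    have hpot : sqAddRpowIntegral ν c 0 (p - 1) t ≤ B / t ^ 2 := by
      simpa [sqAddRpowIntegral, c, hp] using integral_rpow_sq_add_dist_sq_le ν e₁ hC hball ht
    rw [he, iteratedDeriv_const_mul_field, abs_mul]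
    calc |(sphC (m + 2))⁻¹| * |iteratedDeriv 2 (sqAddRpowIntegral ν c 0 p) t|
        ≤ A * sqAddRpowIntegral ν c 0 (p - 1) t := by
          rw [mul_assoc]
          gcongr
          exact abs_iteratedDeriv_two_sqAddRpowIntegral_zero_le hc hc0 hp0 ht
      _ ≤ A * (B / t ^ 2) := by gcongr
      _ ≤ (A * B + 1) / t ^ 2 := by rw [mul_div_assoc']; gcongr; linarith

end
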